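/- Assume (H3) and (H4). If U ∈ ℝⁿ is a solution of the Bellman problem sup_{P∈𝒫}{−A(P)U + y(P)} = 0, then there exists a sequence (Pℓ)_{ℓ≥1} in 𝒫 such that −A(Pℓ)U + y(Pℓ) → 0 entrywise as ℓ → ∞ and A(Pℓ) is a nonsingular M-matrix (equivalently, a WCDD matrix) for every ℓ. -/

import Mathlib

open Filter Topology Finset

open scoped Classical

noncomputable section

/-- Row `i` of `A` is strictly diagonally dominant (SDD). -/
def SDDRow {n : ℕ} (A : Matrix (Fin n) (Fin n) ℝ) (i : Fin n) : Prop :=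
  ∑ j ∈ Finset.univ.erase i, |A i j| < |A i i|

/-- `A` is weakly diagonally dominant (WDD). -/
def WDD {n : ℕ} (A : Matrix (Fin n) (Fin n) ℝ) : Prop :=
  ∀ i, ∑ j ∈ Finset.univ.erase i, |A i j| ≤ |A i i|

/-- `A` is a Z-matrix: nonpositive off-diagonal entries. -/
def ZMat {n : ℕ} (A : Matrix (Fin n) (Fin n) ℝ) : Prop :=
  ∀ i j, i ≠ j → A i j ≤ 0

/-- `A` is weakly chained diagonally dominant (WCDD). -/
def WCDD {n : ℕ} (A : Matrix (Fin n) (Fin n) ℝ) : Prop :=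
  WDD A ∧ ∀ i, ¬ SDDRow A i →
    ∃ j, Relation.ReflTransGen (fun k l => A k l ≠ 0) i j ∧ SDDRow A j

/-- Row-decoupled data. -/
def RowDecoupled {n : ℕ} {P : Fin n → Type*}
    (A : (∀ i, P i) → Matrix (Fin n) (Fin n) ℝ)
    (y : (∀ i, P i) → (Fin n → ℝ)) : Prop :=
  ∀ p q : ∀ i, P i, ∀ i, p i = q i →
    (∀ j, A p i j = A q i j) ∧ y p i = y q i

/-- `U` solves the Bellman problem `sup_{P∈𝒫} {−A(P)U + y(P)} = 0`. -/
def IsBellmanSol {n : ℕ} {P : Fin n → Type*}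
    (A : (∀ i, P i) → Matrix (Fin n) (Fin n) ℝ)
    (y : (∀ i, P i) → (Fin n → ℝ)) (U : Fin n → ℝ) : Prop :=
  ∀ i, IsLUB (Set.range fun p => y p i - (A p).mulVec U i) 0

/-- (H3): every `A(P)` is a WDD Z-matrix with nonnegative diagonal entries whose diagonal
entries are at most `1` on rows that are not SDD. -/
def H3 {n : ℕ} {P : Fin n → Type*}
    (A : (∀ i, P i) → Matrix (Fin n) (Fin n) ℝ) : Prop :=
  ∀ p, ZMat (A p) ∧ WDD (A p) ∧ (∀ i, 0 ≤ A p i i) ∧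
    ∀ i, ¬ SDDRow (A p) i → A p i i ≤ 1

/-- `ŷ(P)ᵢ = y(P)ᵢ` if row `i` of `A(P)` is not SDD, and `−∞` otherwise. -/
def yhat {n : ℕ} {P : Fin n → Type*}
    (A : (∀ i, P i) → Matrix (Fin n) (Fin n) ℝ)
    (y : (∀ i, P i) → (Fin n → ℝ)) (p : ∀ i, P i) (i : Fin n) : EReal :=
  if SDDRow (A p) i then ⊥ else ((y p i : ℝ) : EReal)

/-- The operator `𝕄U = U + 𝔸U` on vectors with entries in `ℝ ∪ {−∞}`, where
`[𝔸U]ᵢ = sup_P [−A(P)U + ŷ(P)]ᵢ`, computed with the conventions `r + (−∞) = −∞`,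
`t·(−∞) = −∞` for `t > 0` and `0·(−∞) = 0`; entrywise this reads
`[𝕄U]ᵢ = sup_P { (1 − A(P)ᵢᵢ)·Uᵢ + Σ_{j≠i} (−A(P)ᵢⱼ)·Uⱼ + ŷ(P)ᵢ }`. -/
def Mbb {n : ℕ} {P : Fin n → Type*}
    (A : (∀ i, P i) → Matrix (Fin n) (Fin n) ℝ)
    (y : (∀ i, P i) → (Fin n → ℝ)) (U : Fin n → EReal) : Fin n → EReal :=
  fun i => ⨆ p : ∀ i, P i,
    (((1 - A p i i : ℝ) : EReal) * U i
      + ∑ j ∈ Finset.univ.erase i, ((-A p i j : ℝ) : EReal) * U j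
      + yhat A y p i)

/-- (H4): consecutive applications of `𝕄` are eventually strictly suboptimal. -/
def H4 {n : ℕ} {P : Fin n → Type*}
    (A : (∀ i, P i) → Matrix (Fin n) (Fin n) ℝ)
    (y : (∀ i, P i) → (Fin n → ℝ)) : Prop :=
  ∀ (U : Fin n → ℝ) (i : Fin n), ∃ m₁ m₂ : ℕ, m₁ < m₂ ∧
    (Mbb A y)^[m₂] (fun j => ((U j : ℝ) : EReal)) i
      < (Mbb A y)^[m₁] (fun j => ((U j : ℝ) : EReal)) i

/-!
Call an index good if edges of `ε`-optimal controls link it to an SDD row. Were some index bad,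
every `ε`-optimal control would have non-SDD rows on the bad indices and keep them among
themselves; as `𝕄` is monotone (diagonal entries `≤ 1` on non-SDD rows) and `𝕄U ≤ U`, this
forces `𝕄ᵐU = U` on the bad indices for all `m`, against (H4). Gluing row by row the controls
that realise the links (row-decoupling) gives an `ε`-optimal control with a WCDD matrix. A WCDD
Z-matrix with nonnegative diagonal satisfies the minimum principle `0 ≤ A x → 0 ≤ x`, hence is a
nonsingular M-matrix; letting `ε → 0` gives the sequence.
-/

open scoped Matrix

namespace ZMat

variable {n : ℕ} {A : Matrix (Fin n) (Fin n) ℝ}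

lemma sum_erase_abs (hZ : ZMat A) (i : Fin n) :
    ∑ j ∈ univ.erase i, |A i j| = A i i - ∑ j, A i j := by
  rw [← Finset.add_sum_erase _ _ (mem_univ i), sub_add_cancel_left, ← Finset.sum_neg_distrib]
  exact Finset.sum_congr rfl fun j hj => abs_of_nonpos (hZ i j (Finset.ne_of_mem_erase hj).symm)

lemma sddRow_iff (hZ : ZMat A) {i : Fin n} (hd : 0 ≤ A i i) :
    SDDRow A i ↔ 0 < ∑ j, A i j := by
  rw [SDDRow, hZ.sum_erase_abs, abs_of_nonneg hd, sub_lt_self_iff]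

lemma sum_row_nonneg (hZ : ZMat A) (hW : WDD A) {i : Fin n} (hd : 0 ≤ A i i) :
    0 ≤ ∑ j, A i j := by
  have := hW i
  rwa [hZ.sum_erase_abs, abs_of_nonneg hd, sub_le_self_iff] at this

lemma not_sddRow_of_isMin (hZ : ZMat A) (hW : WDD A) (hd : ∀ i, 0 ≤ A i i) {x : Fin n → ℝ}
    {i : Fin n} (hmin : ∀ k, x i ≤ x k) (hneg : x i < 0) (hx : 0 ≤ (A *ᵥ x) i) :
    ¬ SDDRow A i ∧ ∀ k, A i k ≠ 0 → x k = x i := by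
  have hsplit : (A *ᵥ x) i = x i * ∑ k, A i k + ∑ k, A i k * (x k - x i) := by
    simp only [Matrix.mulVec, dotProduct, mul_sub, Finset.sum_sub_distrib, Finset.mul_sum]
    ring_nf
  have hterm : ∀ k ∈ univ, A i k * (x k - x i) ≤ 0 := by
    intro k _
    rcases eq_or_ne i k with rfl | hik
    · simp
    · exact mul_nonpos_of_nonpos_of_nonneg (hZ i k hik) (sub_nonneg.2 (hmin k))
  have hfirst : x i * ∑ k, A i k ≤ 0 :=
    mul_nonpos_of_nonpos_of_nonneg hneg.le (hZ.sum_row_nonneg hW (hd i))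
  have hrest : ∑ k, A i k * (x k - x i) ≤ 0 := Finset.sum_nonpos hterm
  refine ⟨fun hs => ?_, fun k hk => ?_⟩
  · have := mul_neg_of_neg_of_pos hneg ((hZ.sddRow_iff (hd i)).1 hs)
    linarith
  · have hzero := (Finset.sum_eq_zero_iff_of_nonpos hterm).1 (by linarith) k (mem_univ k)
    linarith [(mul_eq_zero.1 hzero).resolve_left hk]

/-- A negative minimum of `x` would spread along a walk to an SDD row, where `0 ≤ A x` fails. -/
lemma nonneg_of_mulVec_nonneg (hZ : ZMat A) (hd : ∀ i, 0 ≤ A i i) (hW : WCDD A)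
    {x : Fin n → ℝ} (hx : 0 ≤ A *ᵥ x) : 0 ≤ x := by
  intro i₀
  by_contra! hi₀
  obtain ⟨i, -, hi⟩ := Finset.exists_min_image univ x ⟨i₀, mem_univ i₀⟩
  have hmin : ∀ k, x i ≤ x k := fun k => hi k (mem_univ k)
  have hneg : x i < 0 := (hmin i₀).trans_lt hi₀
  have hprop := fun j (hj : x j = x i) =>
    hZ.not_sddRow_of_isMin hW.1 hd (hj ▸ hmin) (hj ▸ hneg) (hx j)
  have hwalk : ∀ j, Relation.ReflTransGen (fun k l => A k l ≠ 0) i j → x j = x i := by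
    intro j hij
    induction hij with
    | refl => rfl
    | tail _ hkl ih => exact ((hprop _ ih).2 _ hkl).trans ih
  obtain ⟨j, hij, hj⟩ := hW.2 i (hprop i rfl).1
  exact (hprop j (hwalk j hij)).1 hj

lemma isUnit_det (hZ : ZMat A) (hd : ∀ i, 0 ≤ A i i) (hW : WCDD A) : IsUnit A.det := by
  refine isUnit_iff_ne_zero.2 fun h => ?_
  obtain ⟨v, hv0, hv⟩ := Matrix.exists_mulVec_eq_zero_iff.2 h
  have hpos := hZ.nonneg_of_mulVec_nonneg hd hW hv.ge
  have hneg := hZ.nonneg_of_mulVec_nonneg hd hW (x := -v) (by rw [Matrix.mulVec_neg, hv, neg_zero])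
  exact hv0 (le_antisymm (by simpa using hneg) hpos)

lemma inv_nonneg (hZ : ZMat A) (hd : ∀ i, 0 ≤ A i i) (hW : WCDD A) (i j : Fin n) :
    0 ≤ A⁻¹ i j := by
  have hcol : A *ᵥ (A⁻¹ *ᵥ Pi.single j 1) = Pi.single j 1 := by
    rw [Matrix.mulVec_mulVec, Matrix.mul_nonsing_inv A (hZ.isUnit_det hd hW), Matrix.one_mulVec]
  have := hZ.nonneg_of_mulVec_nonneg hd hW (hcol ▸ Pi.single_nonneg.2 zero_le_one) i
  rwa [Matrix.mulVec_single_one] at this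

end ZMat

section Selection

variable {ι : Type*} {O : ι → Type*} (term : ∀ i, O i → Prop) (edge : ∀ i, O i → ι → Prop)

/-- `i` reaches a terminal option through at most `k - 1` edges. -/
def ReachesWithin : ℕ → ι → Prop
  | 0, _ => False
  | k + 1, i => ∃ o, term i o ∨ ∃ j, edge i o j ∧ ReachesWithin k j

variable {term edge}

lemma not_reachesWithin_of_forall {i : ι} (hi : ∀ k, ¬ ReachesWithin term edge k i) (o : O i) :
    ¬ term i o ∧ ∀ j, edge i o j → ∀ k, ¬ ReachesWithin term edge k j :=
  ⟨fun ht => hi 1 ⟨o, .inl ht⟩, fun j hj k hk => hi (k + 1) ⟨o, .inr ⟨j, hj, hk⟩⟩⟩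

/-- Select at each index an option that is terminal or has an edge lowering the least such `k`. -/
lemma exists_selection_reaches (h : ∀ i, ∃ k, ReachesWithin term edge k i) :
    ∃ c : ∀ i, O i,
      ∀ i, ∃ j, Relation.ReflTransGen (fun a b => edge a (c a) b) i j ∧ term j (c j) := by
  classical
  let rank i := Nat.find (h i)
  have hstep : ∀ i, ∃ o, term i o ∨ ∃ j, edge i o j ∧ rank j < rank i := by
    intro i
    have hspec : ReachesWithin term edge (rank i) i := Nat.find_spec (h i)
    rcases hr : rank i with _ | k
    · rw [hr] at hspec
      exact hspec.elim
    · rw [hr] at hspec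
      obtain ⟨o, ho⟩ := hspec
      exact ⟨o, ho.imp_right fun ⟨j, hj, hjk⟩ =>
        ⟨j, hj, (Nat.find_le hjk).trans_lt k.lt_succ_self⟩⟩
  choose c hc using hstep
  refine ⟨c, fun i => ?_⟩
  induction i using (measure rank).wf.induction with
  | h i ih =>
    rcases hc i with ht | ⟨j, hj, hji⟩
    · exact ⟨i, .refl, ht⟩
    · obtain ⟨l, hjl, hl⟩ := ih j hji
      exact ⟨l, .head hj hjl, hl⟩

end Selection

lemma EReal.coe_finset_sum {α : Type*} (s : Finset α) (f : α → ℝ) :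
    ((∑ j ∈ s, f j : ℝ) : EReal) = ∑ j ∈ s, (f j : EReal) := by
  induction s using Finset.induction with
  | empty => simp
  | insert _ _ h ih => rw [Finset.sum_insert h, Finset.sum_insert h, ← ih, EReal.coe_add]

section Bellman

variable {n : ℕ} {P : Fin n → Type*} {A : (∀ i, P i) → Matrix (Fin n) (Fin n) ℝ}
  {y : (∀ i, P i) → Fin n → ℝ}

lemma Mbb_summand_eq_bot {p : ∀ i, P i} {i : Fin n} (hs : SDDRow (A p) i) (W : Fin n → EReal) :
    ((1 - A p i i : ℝ) : EReal) * W i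
      + ∑ j ∈ univ.erase i, ((-A p i j : ℝ) : EReal) * W j + yhat A y p i = ⊥ := by
  rw [yhat, if_pos hs, EReal.add_bot]

lemma Mbb_summand_eq_coe {p : ∀ i, P i} {i : Fin n} (hs : ¬ SDDRow (A p) i)
    {W : Fin n → EReal} {w : Fin n → ℝ} (hWi : W i = w i) (hW : ∀ j, A p i j ≠ 0 → W j = w j) :
    ((1 - A p i i : ℝ) : EReal) * W i
      + ∑ j ∈ univ.erase i, ((-A p i j : ℝ) : EReal) * W j + yhat A y p i
      = ((w i + (y p i - (A p *ᵥ w) i) : ℝ) : EReal) := by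
  have hsum : ∑ j ∈ univ.erase i, ((-A p i j : ℝ) : EReal) * W j
      = ((∑ j ∈ univ.erase i, -A p i j * w j : ℝ) : EReal) := by
    rw [EReal.coe_finset_sum]
    refine Finset.sum_congr rfl fun j _ => ?_
    by_cases hA : A p i j = 0
    · simp [hA]
    · rw [hW j hA, EReal.coe_mul]
  have hrow : (A p *ᵥ w) i = A p i i * w i + ∑ j ∈ univ.erase i, A p i j * w j := by
    rw [Matrix.mulVec, dotProduct, ← Finset.add_sum_erase _ _ (mem_univ i)]
  rw [yhat, if_neg hs, hWi, hsum, ← EReal.coe_mul, ← EReal.coe_add, ← EReal.coe_add, hrow]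
  simp only [neg_mul, Finset.sum_neg_distrib]
  ring_nf

lemma Mbb_monotone (h3 : H3 A) : Monotone (Mbb A y) := by
  intro W₁ W₂ hW i
  refine iSup_mono fun p => ?_
  by_cases hs : SDDRow (A p) i
  · rw [Mbb_summand_eq_bot hs]
    exact bot_le
  · obtain ⟨hZ, -, -, hle⟩ := h3 p
    gcongr with j hj
    · exact EReal.coe_nonneg.2 (sub_nonneg.2 (hle i hs))
    · exact hW i
    · exact EReal.coe_nonneg.2 (neg_nonneg.2 (hZ i j (Finset.ne_of_mem_erase hj).symm))
    · exact hW j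

lemma Mbb_coe_le {U : Fin n → ℝ} (hr : ∀ p i, y p i - (A p *ᵥ U) i ≤ 0) :
    Mbb A y (fun j => (U j : EReal)) ≤ fun j => (U j : EReal) := by
  intro i
  refine iSup_le fun p => ?_
  by_cases hs : SDDRow (A p) i
  · exact (Mbb_summand_eq_bot (y := y) hs (fun j => (U j : EReal))).trans_le bot_le
  · refine (Mbb_summand_eq_coe hs rfl fun _ _ => rfl).trans_le ?_
    exact EReal.coe_le_coe_iff.2 (by linarith [hr p i])

lemma coe_le_Mbb_apply {U : Fin n → ℝ} (hU : IsBellmanSol A y U) {ε : ℝ} (hε : 0 < ε)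
    {W : Fin n → EReal} {i : Fin n}
    (hi : ∀ p, -ε < y p i - (A p *ᵥ U) i → ¬ SDDRow (A p) i ∧ ∀ j, A p i j ≠ 0 → W j = U j)
    (hWi : W i = U i) : (U i : EReal) ≤ Mbb A y W i := by
  refine EReal.ge_of_forall_gt_iff_ge.1 fun z hz => ?_
  have hzU : z < U i := EReal.coe_lt_coe_iff.1 hz
  obtain ⟨_, ⟨p, rfl⟩, hpz, -⟩ :=
    (hU i).exists_between (max_lt (sub_neg.2 hzU) (neg_neg_of_pos hε))
  obtain ⟨hs, hW⟩ := hi p ((le_max_right _ _).trans_lt hpz)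
  refine le_iSup_of_le p ?_
  rw [Mbb_summand_eq_coe hs hWi hW]
  exact EReal.coe_le_coe_iff.2 (by linarith [(le_max_left _ _).trans_lt hpz])

/-- The iterates decrease from `U` since `𝕄U ≤ U`, and on `B` the `ε`-optimal controls push
them back up to `U`. -/
lemma iterate_Mbb_coe_eq_of_closed (h3 : H3 A) {U : Fin n → ℝ} (hU : IsBellmanSol A y U)
    {ε : ℝ} (hε : 0 < ε) {B : Set (Fin n)}
    (hB : ∀ i ∈ B, ∀ p, -ε < y p i - (A p *ᵥ U) i → ¬ SDDRow (A p) i ∧ ∀ j, A p i j ≠ 0 → j ∈ B)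
    (m : ℕ) : ∀ i ∈ B, (Mbb A y)^[m] (fun j => (U j : EReal)) i = U i := by
  induction m with
  | zero => exact fun _ _ => rfl
  | succ m ih =>
    intro i hi
    have hanti := (Mbb_monotone h3).antitone_iterate_of_map_le
      (Mbb_coe_le (U := U) fun p i => (hU i).1 ⟨p, rfl⟩)
    refine le_antisymm (hanti (Nat.zero_le (m + 1)) i) ?_
    rw [Function.iterate_succ_apply']
    exact coe_le_Mbb_apply hU hε
      (fun p hp => (hB i hi p hp).imp_right fun h j hj => ih j (h j hj)) (ih i hi)

end Bellman

namespace RowDecoupled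

variable {n : ℕ} {P : Fin n → Type*} {A : (∀ i, P i) → Matrix (Fin n) (Fin n) ℝ}
  {y : (∀ i, P i) → Fin n → ℝ} {p q : ∀ i, P i} {i : Fin n}

lemma row_eq (hrd : RowDecoupled A y) (h : p i = q i) : A p i = A q i :=
  funext (hrd p q i h).1

lemma sddRow_iff (hrd : RowDecoupled A y) (h : p i = q i) : SDDRow (A p) i ↔ SDDRow (A q) i := by
  simp only [SDDRow, hrd.row_eq h]

lemma residual_eq (hrd : RowDecoupled A y) (h : p i = q i) (U : Fin n → ℝ) :
    y p i - (A p *ᵥ U) i = y q i - (A q *ᵥ U) i := by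
  simp only [Matrix.mulVec, hrd.row_eq h, (hrd p q i h).2]

end RowDecoupled

lemma exists_wcdd_control {n : ℕ} {P : Fin n → Type*} {A : (∀ i, P i) → Matrix (Fin n) (Fin n) ℝ}
    {y : (∀ i, P i) → Fin n → ℝ} (hrd : RowDecoupled A y) (h3 : H3 A) (h4 : H4 A y)
    {U : Fin n → ℝ} (hU : IsBellmanSol A y U) {ε : ℝ} (hε : 0 < ε) :
    ∃ q : ∀ i, P i, (∀ i, -ε < y q i - (A q *ᵥ U) i) ∧ WCDD (A q) := by
  let O i := {p : ∀ i, P i // -ε < y p i - (A p *ᵥ U) i}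
  let term i (p : O i) := SDDRow (A p.1) i
  let edge i (p : O i) j := A p.1 i j ≠ 0
  have hreach : ∀ i, ∃ k, ReachesWithin term edge k i := by
    by_contra! ⟨i, hi⟩
    have hinv := iterate_Mbb_coe_eq_of_closed h3 hU hε
      (B := {j | ∀ k, ¬ ReachesWithin term edge k j})
      fun j hj p hp => not_reachesWithin_of_forall hj ⟨p, hp⟩
    obtain ⟨m₁, m₂, -, hlt⟩ := h4 U i
    rw [hinv m₁ i hi, hinv m₂ i hi] at hlt
    exact hlt.false
  obtain ⟨c, hc⟩ := exists_selection_reaches hreach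
  let q i := (c i).1 i
  have hq : ∀ i, (c i).1 i = q i := fun _ => rfl
  refine ⟨q, fun i => hrd.residual_eq (hq i) U ▸ (c i).2, (h3 q).2.1, fun i _ => ?_⟩
  obtain ⟨j, hij, hj⟩ := hc i
  refine ⟨j, Relation.ReflTransGen.mono (fun a b hab => ?_) i j hij, (hrd.sddRow_iff (hq j)).1 hj⟩
  rwa [← hrd.row_eq (hq a)]

theorem bellman_eventually_M_matrix_general
    {n : ℕ} {P : Fin n → Type*}
    (A : (∀ i, P i) → Matrix (Fin n) (Fin n) ℝ) (y : (∀ i, P i) → Fin n → ℝ)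
    (hrd : RowDecoupled A y) (h3 : H3 A) (h4 : H4 A y)
    (U : Fin n → ℝ) (hU : IsBellmanSol A y U) :
    ∃ Pc : ℕ → ∀ i, P i,
      (∀ i : Fin n,
        Tendsto (fun ℓ => y (Pc ℓ) i - (A (Pc ℓ)).mulVec U i) atTop (𝓝 0)) ∧
      ∀ ℓ, (ZMat (A (Pc ℓ)) ∧ IsUnit (A (Pc ℓ)).det ∧ ∀ i j, 0 ≤ (A (Pc ℓ))⁻¹ i j) ∧
        WCDD (A (Pc ℓ)) := by
  choose Pc hnear hwcdd using fun ℓ : ℕ =>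
    exists_wcdd_control hrd h3 h4 hU (Nat.one_div_pos_of_nat (α := ℝ) (n := ℓ))
  refine ⟨Pc, fun i => ?_, fun ℓ => ?_⟩
  · refine tendsto_of_tendsto_of_tendsto_of_le_of_le ?_ tendsto_const_nhds
      (fun ℓ => (hnear ℓ i).le) (fun ℓ => (hU i).1 ⟨Pc ℓ, rfl⟩)
    simpa using (tendsto_one_div_add_atTop_nhds_zero_nat (𝕜 := ℝ)).neg
  · obtain ⟨hZ, -, hd, -⟩ := h3 (Pc ℓ)
    exact ⟨⟨hZ, hZ.isUnit_det hd (hwcdd ℓ), hZ.inv_nonneg hd (hwcdd ℓ)⟩, hwcdd ℓ⟩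

/-- Under (H3) and (H4): if `U` solves the Bellman problem, then the supremum can be
approximated by a sequence of controls whose matrices are nonsingular M-matrices
(equivalently, WCDD matrices). -/
theorem bellman_eventually_M_matrix
    {n : ℕ} (hn : 1 ≤ n) {P : Fin n → Type*} [∀ i, Nonempty (P i)]
    (A : (∀ i, P i) → Matrix (Fin n) (Fin n) ℝ) (y : (∀ i, P i) → Fin n → ℝ)
    (hrd : RowDecoupled A y) (h3 : H3 A) (h4 : H4 A y)
    (U : Fin n → ℝ) (hU : IsBellmanSol A y U) :
    ∃ Pc : ℕ → ∀ i, P i,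
      (∀ i : Fin n,
        Tendsto (fun ℓ => y (Pc ℓ) i - (A (Pc ℓ)).mulVec U i) atTop (𝓝 0)) ∧
      ∀ ℓ, (ZMat (A (Pc ℓ)) ∧ IsUnit (A (Pc ℓ)).det ∧ ∀ i j, 0 ≤ (A (Pc ℓ))⁻¹ i j) ∧
        WCDD (A (Pc ℓ)) :=
  bellman_eventually_M_matrix_general A y hrd h3 h4 U hU
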